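/- arXiv:math/0605679 — 2 statements merged into one kernel-verified Lean document; each statement's English description precedes it below -/
import Mathlib

section
/- Let Σ be the sigma-product of ω₁ copies of the Hilbert cube (with base point 0), regarded as a subspace of the product Q^T (where |T| = ω₁). If X ⊆ Σ is a retract of Σ, then the closure Y of X in Q^T is a retract of Q^T; in particular, Y is a compact absolute retract and Y, with the inclusion X ↪ Y, is the Stone–Čech compactification of X. -/
open Set Topology

/-- The Hilbert cube `I^ω`. -/
abbrev HilbertCube : Type := ℕ → unitInterval

/-- The sigma-product of `T`-many copies of the Hilbert cube with base point `0`: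
all points of the product `Q^T` having at most countably many nonzero coordinates. -/
def SigmaProd (T : Type) : Set (T → HilbertCube) :=
  {x | {t | x t ≠ 0}.Countable}

/-- `X` is a retract of the ambient space `Z`: there is a continuous `r : Z → Z` with
range contained in `X` fixing `X` pointwise. -/
def IsRetract {Z : Type} [TopologicalSpace Z] (X : Set Z) : Prop :=
  ∃ r : Z → Z, Continuous r ∧ Set.range r ⊆ X ∧ ∀ x ∈ X, r x = x

/-- A compact Hausdorff space is an absolute retract if it is (homeomorphic to)
a retract of some Tychonoff cube `[0,1]^κ`. -/
def IsCompactAR (Y : Type) [TopologicalSpace Y] : Prop :=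
  ∃ (ι : Type) (s : Set (ι → unitInterval)),
    Nonempty (Y ≃ₜ ↥s) ∧
    ∃ r : (ι → unitInterval) → (ι → unitInterval),
      Continuous r ∧ Set.range r ⊆ s ∧ ∀ y ∈ s, r y = y

/-! A continuous map `f` from `Σ` to a metrizable space depends on countably many coordinates.
Near the compact cube `{x | support x ⊆ B}`, `B` countable, `f` is uniformly continuous, so up to
each `1 / (m + 1)` it depends on finitely many coordinates; closing `B` off under this countably
often gives a countable `A` with `f x = f (A.indicator x)` on `Σ`. So `f` extends over `Q^T`, and,
embedding a compact Hausdorff space in a Tychonoff cube, so does every map from `Σ` to it. Extending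
`Σ → X ⊆ Q^T` along a retraction `Σ → X` gives a retraction of `Q^T` onto the closure of `X`, and
extending `Σ → X → K` gives the Stone–Čech property. -/

open Filter Function TopologicalSpace Uniformity

section UniformPi

variable {ι : Type*} {α : ι → Type*} [∀ i, UniformSpace (α i)]

theorem exists_finset_of_mem_uniformity_pi {V : Set ((∀ i, α i) × (∀ i, α i))}
    (hV : V ∈ 𝓤 (∀ i, α i)) :
    ∃ F : Finset ι, ∀ x y : ∀ i, α i, (∀ i ∈ F, x i = y i) → (x, y) ∈ V := by
  rw [Pi.uniformity, mem_iInf] at hV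
  obtain ⟨I, hI, W, hW, rfl⟩ := hV
  refine ⟨hI.toFinset, fun x y hxy => mem_iInter.2 fun i => ?_⟩
  obtain ⟨U, hU, hUW⟩ := hW i
  exact hUW (by simpa [hxy i (hI.mem_toFinset.2 i.2)] using refl_mem_uniformity hU)

theorem IsCompact.exists_finset_forall_dist_lt {S : Set (∀ i, α i)} {M : Type*}
    [PseudoMetricSpace M] {f : S → M} (hf : Continuous f) {K : Set S} (hK : IsCompact K)
    {ε : ℝ} (hε : 0 < ε) :
    ∃ F : Finset ι, ∀ y ∈ K, ∀ z : S, (∀ i ∈ F, y.1 i = z.1 i) → dist (f y) (f z) < ε := by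
  have hU := hK.uniformContinuousAt_of_continuousAt f (fun a _ => hf.continuousAt)
    (Metric.dist_mem_uniformity hε)
  rw [uniformity_subtype, mem_comap] at hU
  obtain ⟨V, hV, hVU⟩ := hU
  obtain ⟨F, hF⟩ := exists_finset_of_mem_uniformity_pi hV
  exact ⟨F, fun y hy z hyz => hVU (a := (y, z)) (hF _ _ hyz) hy⟩

end UniformPi

theorem Set.exists_seq_countable_of_step {T : Type*} {P : Set T → Set T → Prop}
    (h : ∀ B : Set T, B.Countable → ∃ C, C.Countable ∧ B ⊆ C ∧ P B C) :
    ∃ A : ℕ → Set T, Monotone A ∧ (∀ k, (A k).Countable) ∧ ∀ k, P (A k) (A (k + 1)) := by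
  choose! g hg using h
  have hc : ∀ k, (g^[k] ∅).Countable := by
    intro k
    induction k with
    | zero => exact countable_empty
    | succ k ih => rw [iterate_succ_apply']; exact (hg _ ih).1
  refine ⟨fun k => g^[k] ∅, monotone_nat_of_le_succ fun k => ?_, hc, fun k => ?_⟩
  · rw [iterate_succ_apply']; exact (hg _ (hc k)).2.1
  · show P (g^[k] ∅) (g^[k + 1] ∅)
    rw [iterate_succ_apply']; exact (hg _ (hc k)).2.2

section Extension

variable {X Y K : Type*} [TopologicalSpace X] [TopologicalSpace Y] [TopologicalSpace K]
  [CompactSpace K] [T2Space K]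

theorem DenseRange.exists_continuous_extension_of_unitInterval {e : X → Y} (he : DenseRange e)
    (hext : ∀ φ : X → unitInterval, Continuous φ →
      ∃ ψ : Y → unitInterval, Continuous ψ ∧ ψ ∘ e = φ)
    {f : X → K} (hf : Continuous f) : ∃ g : Y → K, Continuous g ∧ g ∘ e = f := by
  let β : K → C(K, unitInterval) → unitInterval := fun k φ => φ k
  have hβ : IsClosedEmbedding β := by
    refine (continuous_pi fun φ => φ.continuous).isClosedEmbedding fun a b hab => ?_
    by_contra hne
    obtain ⟨φ, hφ, hφab⟩ := separatesPoints_continuous_of_t35Space_Icc hne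
    exact hφab (congrFun hab ⟨φ, hφ⟩)
  choose ψ hψ hψe using fun φ : C(K, unitInterval) => hext (φ ∘ f) (φ.continuous.comp hf)
  let H : Y → C(K, unitInterval) → unitInterval := fun y φ => ψ φ y
  have hH : Continuous H := continuous_pi hψ
  have hHe : H ∘ e = β ∘ f := funext fun x => funext fun φ => congrFun (hψe φ) x
  have hHβ : ∀ y, H y ∈ range β := by
    refine range_subset_iff.1 <| (hH.range_subset_closure_image_dense he).trans ?_
    rw [← range_comp, hHe, hβ.isClosed_range.closure_subset_iff, range_comp]
    exact image_subset_range _ _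
  choose g hg using hHβ
  refine ⟨g, hβ.continuous_iff.2 ?_, funext fun x => hβ.injective ?_⟩
  · simpa only [Function.comp_def, hg] using hH
  · simpa [hg] using congrFun hHe x

end Extension

section Retract

variable {Z : Type} [TopologicalSpace Z]

theorem IsRetract.closure_image_val [T2Space Z] {S : Set Z} (hS : Dense S)
    (hext : ∀ f : S → Z, Continuous f → ∃ g : Z → Z, Continuous g ∧ g ∘ Subtype.val = f)
    {X : Set S} (hX : IsRetract X) : IsRetract (closure (Subtype.val '' X)) := by
  obtain ⟨r, hr, hrX, hrfix⟩ := hX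
  obtain ⟨R, hR, hRr⟩ := hext (Subtype.val ∘ r) (continuous_subtype_val.comp hr)
  have hRfix : ∀ z ∈ Subtype.val '' X, R z = z := by
    rintro _ ⟨x, hx, rfl⟩
    rw [← comp_apply (f := R), hRr, comp_apply, hrfix x hx]
  refine ⟨R, hR, (hR.range_subset_closure_image_dense hS).trans (closure_mono ?_), fun y hy =>
    closure_minimal hRfix (isClosed_eq hR continuous_id) hy⟩
  rintro _ ⟨z, hz, rfl⟩
  rw [← Subtype.coe_mk z hz, ← comp_apply (f := R), hRr]
  exact mem_image_of_mem _ (hrX (mem_range_self _))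

theorem IsRetract.exists_continuous_extension_closure {S : Set Z} {M : Type*}
    [TopologicalSpace M]
    (hext : ∀ f : S → M, Continuous f → ∃ g : Z → M, Continuous g ∧ g ∘ Subtype.val = f)
    {X : Set S} (hX : IsRetract X) {f : X → M} (hf : Continuous f) :
    ∃ g : closure (Subtype.val '' X) → M, Continuous g ∧
      ∀ x : X, g ⟨x.1.1, subset_closure ⟨x.1, x.2, rfl⟩⟩ = f x := by
  obtain ⟨r, hr, hrX, hrfix⟩ := hX
  let r' : S → X := fun z => ⟨r z, hrX (mem_range_self z)⟩
  obtain ⟨G, hG, hGf⟩ := hext (f ∘ r') (hf.comp (hr.subtype_mk _))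
  refine ⟨G ∘ Subtype.val, hG.comp continuous_subtype_val, fun x => ?_⟩
  have hrx : r' x = x := Subtype.ext (hrfix x x.2)
  simpa [hrx] using congrFun hGf x.1

theorem IsRetract.image_homeomorph {W : Type} [TopologicalSpace W] (e : Z ≃ₜ W) {s : Set Z}
    (hs : IsRetract s) : IsRetract (e '' s) := by
  obtain ⟨r, hr, hrs, hrfix⟩ := hs
  refine ⟨e ∘ r ∘ e.symm, e.continuous.comp (hr.comp e.symm.continuous), ?_, ?_⟩
  · rintro _ ⟨w, rfl⟩
    exact mem_image_of_mem e (hrs (mem_range_self _))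
  · rintro _ ⟨z, hz, rfl⟩
    simp [hrfix z hz]

theorem IsRetract.isCompactAR {ι : Type} (e : Z ≃ₜ (ι → unitInterval)) {s : Set Z}
    (hs : IsRetract s) : IsCompactAR s :=
  ⟨ι, e '' s, ⟨e.image s⟩, hs.image_homeomorph e⟩

end Retract

namespace SigmaProd

variable {T : Type}

noncomputable def indicator {A : Set T} (hA : A.Countable) (z : T → HilbertCube) : SigmaProd T :=
  ⟨A.indicator z, hA.mono support_indicator_subset⟩

theorem continuous_indicator {A : Set T} (hA : A.Countable) : Continuous (indicator hA) := by
  refine Continuous.subtype_mk (continuous_pi fun t => ?_) _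
  by_cases ht : t ∈ A
  · simpa [ht] using continuous_apply t
  · simpa [ht] using continuous_const

theorem dense : Dense (SigmaProd T) := by
  intro z
  refine mem_closure_of_tendsto (b := atTop) (f := fun F : Finset T => (F : Set T).indicator z)
    (tendsto_pi_nhds.2 fun t => ?_)
    (Eventually.of_forall fun F => F.countable_toSet.mono support_indicator_subset)
  have := (Monotone.tendsto_indicator (fun F : Finset T => (F : Set T))
    (fun _ _ h => Finset.coe_subset.2 h) z t).mono_right (pure_le_nhds _)
  have hU : ⋃ F : Finset T, (F : Set T) = univ :=
    iUnion_eq_univ_iff.2 fun t => ⟨{t}, Finset.mem_singleton_self t⟩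
  rwa [hU, indicator_univ] at this

variable {M : Type*} [TopologicalSpace M] [MetrizableSpace M]

theorem exists_countable_superset_eq_of_eqOn {f : SigmaProd T → M} (hf : Continuous f)
    {B : Set T} (hB : B.Countable) :
    ∃ C, C.Countable ∧ B ⊆ C ∧
      ∀ y z : SigmaProd T, support y.1 ⊆ B → EqOn y.1 z.1 C → f y = f z := by
  let := metrizableSpaceMetric M
  have hK : IsCompact (range (indicator hB)) := isCompact_range (continuous_indicator hB)
  choose F hF using fun m : ℕ =>
    hK.exists_finset_forall_dist_lt hf (Nat.one_div_pos_of_nat (n := m))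
  refine ⟨B ∪ ⋃ m, F m, hB.union (countable_iUnion fun m => (F m).countable_toSet),
    subset_union_left, fun y z hyB hyz => eq_of_forall_dist_le fun ε hε => ?_⟩
  obtain ⟨m, hm⟩ := exists_nat_one_div_lt hε
  have hyK : y ∈ range (indicator hB) := ⟨y, Subtype.ext (indicator_eq_self.2 hyB)⟩
  have hFC : (F m : Set T) ⊆ B ∪ ⋃ m, F m :=
    subset_union_of_subset_right (subset_iUnion (fun m => (F m : Set T)) m) B
  exact (hF m y hyK z fun t ht => hyz (hFC ht)).le.trans hm.le

theorem exists_countable_eq_comp_indicator {f : SigmaProd T → M} (hf : Continuous f) :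
    ∃ (A : Set T) (hA : A.Countable), ∀ x, f x = f (indicator hA x) := by
  obtain ⟨A, hmono, hAc, hAf⟩ :=
    exists_seq_countable_of_step fun _ => exists_countable_superset_eq_of_eqOn hf
  set A' := ⋃ k, A k
  have hA' : A'.Countable := countable_iUnion hAc
  refine ⟨A', hA', fun x => ?_⟩
  let u : ℕ → SigmaProd T := fun k => indicator (hAc k) x
  let v : ℕ → SigmaProd T := fun k =>
    ⟨(A k ∪ A'ᶜ).indicator x, x.2.mono (support_indicator.trans_subset inter_subset_right)⟩
  have huv : ∀ k, f (u k) = f (v k) := fun k =>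
    hAf k _ _ support_indicator_subset fun t ht => by
      have htA' : t ∈ A' := mem_iUnion.2 ⟨k + 1, ht⟩
      by_cases htk : t ∈ A k <;> simp [u, v, indicator, htk, htA']
  have hu : Tendsto u atTop (𝓝 (indicator hA' x)) :=
    tendsto_subtype_rng.2 <| tendsto_pi_nhds.2 fun t =>
      (hmono.tendsto_indicator A x.1 t).mono_right (pure_le_nhds _)
  have hv : Tendsto v atTop (𝓝 x) := by
    refine tendsto_subtype_rng.2 <| tendsto_pi_nhds.2 fun t => ?_
    have hmono' : Monotone fun k => A k ∪ A'ᶜ := fun _ _ h => union_subset_union_left _ (hmono h)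
    have := (hmono'.tendsto_indicator _ x.1 t).mono_right (pure_le_nhds _)
    rwa [← iUnion_union, union_compl_self, indicator_univ] at this
  refine tendsto_nhds_unique ((hf.tendsto x).comp hv) ?_
  simpa only [Function.comp_def, ← huv] using (hf.tendsto _).comp hu

theorem exists_continuous_extension_of_metrizable {f : SigmaProd T → M} (hf : Continuous f) :
    ∃ g : (T → HilbertCube) → M, Continuous g ∧ g ∘ Subtype.val = f := by
  obtain ⟨A, hA, hfA⟩ := exists_countable_eq_comp_indicator hf
  exact ⟨f ∘ indicator hA, hf.comp (continuous_indicator hA), funext fun x => (hfA x).symm⟩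

theorem exists_continuous_extension {K : Type*} [TopologicalSpace K]
    [CompactSpace K] [T2Space K] {f : SigmaProd T → K} (hf : Continuous f) :
    ∃ g : (T → HilbertCube) → K, Continuous g ∧ g ∘ Subtype.val = f :=
  dense.denseRange_val.exists_continuous_extension_of_unitInterval
    (fun _ => exists_continuous_extension_of_metrizable) hf

end SigmaProd

theorem closure_of_retract_is_retract_and_stoneCech_general
    (T : Type)
    (X : Set ↥(SigmaProd T)) (hX : IsRetract X) :
    (∃ r : (T → HilbertCube) → (T → HilbertCube),
      Continuous r ∧ Set.range r ⊆ closure (Subtype.val '' X) ∧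
      ∀ y ∈ closure (Subtype.val '' X), r y = y) ∧
    IsCompact (closure (Subtype.val '' X)) ∧
    IsCompactAR ↥(closure (Subtype.val '' X)) ∧
    ∀ (K : Type) [TopologicalSpace K] [CompactSpace K] [T2Space K]
      (f : ↥X → K), Continuous f →
      ∃ g : ↥(closure (Subtype.val '' X)) → K, Continuous g ∧
        ∀ x : ↥X, g ⟨(x : ↥(SigmaProd T)).1, subset_closure ⟨x.1, x.2, rfl⟩⟩ = f x := by
  have hY : IsRetract (closure (Subtype.val '' X)) :=
    hX.closure_image_val SigmaProd.dense fun _ => SigmaProd.exists_continuous_extension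
  exact ⟨hY, isClosed_closure.isCompact, hY.isCompactAR Homeomorph.piCurry.symm,
    fun K _ _ _ _ hf =>
      hX.exists_continuous_extension_closure (fun _ => SigmaProd.exists_continuous_extension) hf⟩

/-- if `X ⊆ Σ` is a retract of the sigma-product `Σ` of `ω₁` copies of the
Hilbert cube, then the closure `Y` of `X` in `Q^T` is a retract of `Q^T`; in particular,
`Y` is a compact absolute retract and `Y`, with the inclusion `X ↪ Y`, is the Stone–Čech
compactification of `X`. -/
theorem closure_of_retract_is_retract_and_stoneCech
    (T : Type) (hT : Cardinal.mk T = Cardinal.aleph 1)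
    (X : Set ↥(SigmaProd T)) (hX : IsRetract X) :
    (∃ r : (T → HilbertCube) → (T → HilbertCube),
      Continuous r ∧ Set.range r ⊆ closure (Subtype.val '' X) ∧
      ∀ y ∈ closure (Subtype.val '' X), r y = y) ∧
    IsCompact (closure (Subtype.val '' X)) ∧
    IsCompactAR ↥(closure (Subtype.val '' X)) ∧
    ∀ (K : Type) [TopologicalSpace K] [CompactSpace K] [T2Space K]
      (f : ↥X → K), Continuous f →
      ∃ g : ↥(closure (Subtype.val '' X)) → K, Continuous g ∧
        ∀ x : ↥X, g ⟨(x : ↥(SigmaProd T)).1, subset_closure ⟨x.1, x.2, rfl⟩⟩ = f x :=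
  closure_of_retract_is_retract_and_stoneCech_general T X hX
end

section
/- Let Σ be the sigma-product of ω₁ copies of the Hilbert cube (with base point 0), regarded as a dense subspace of the product Q^T (where |T| = ω₁). Then Σ is pseudocompact and the inclusion Σ ↪ Q^T realizes Q^T as the Stone–Čech compactification of Σ; that is, every continuous map from Σ to a compact Hausdorff space extends continuously to Q^T. -/
/-!
A continuous real function `f` on a Σ-product of compact Hausdorff spaces depends on countably
many coordinates. Otherwise one finds countable sets `A₀ ⊆ A₁ ⊆ ⋯` and pairs of points of `Σ`
agreeing on `Aₙ`, supported in `⋃ Aₙ`, whose `f`-values stay `ε` apart; but the points of `Σ`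
supported in a countable set form a compact set, and a common cluster point of the pairs lies on
the diagonal. Hence `f` factors through the continuous retraction of the full product onto the
points supported in a countable set, so it extends, and is bounded. A compact Hausdorff space `K`
embeds in `ℝ ^ C(K, ℝ)`; extending each coordinate of a map into `K` gives a map of the product
into the closure of the image of `K`, which is that image.
-/

open Set Topology

open Filter

theorem Set.exists_monotone_countable_chain {ι : Type*} (g : Set ι → Set ι)
    (hg : ∀ S, (g S).Countable) :
    ∃ A : ℕ → Set ι, Monotone A ∧ (∀ n, (A n).Countable) ∧ ∀ n, g (A n) ⊆ A (n + 1) := by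
  let A : ℕ → Set ι := fun n => (fun S => S ∪ g S)^[n] ∅
  have hA : ∀ n, A (n + 1) = A n ∪ g (A n) := fun n => Function.iterate_succ_apply' _ n ∅
  refine ⟨A, monotone_nat_of_le_succ fun n => (hA n).symm ▸ subset_union_left, fun n => ?_,
    fun n => (hA n).symm ▸ subset_union_right⟩
  induction n with
  | zero => exact countable_empty
  | succ n ih => exact (hA n).symm ▸ ih.union (hg _)

section SigmaProduct

variable {ι : Type*} {X : ι → Type*} (b : ∀ i, X i)

def sigmaProduct : Set (∀ i, X i) :=
  {x | {i | x i ≠ b i}.Countable}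

variable {b}

theorem mem_sigmaProduct_self : b ∈ sigmaProduct b := by
  simp [sigmaProduct]

theorem mem_pi_compl_singleton_iff {A : Set ι} {x : ∀ i, X i} :
    x ∈ Aᶜ.pi (fun i => {b i}) ↔ {i | x i ≠ b i} ⊆ A := by
  simp only [Set.mem_pi, mem_compl_iff, mem_singleton_iff, subset_def, mem_ofPred_eq]
  exact forall_congr' fun i => not_imp_comm

theorem pi_compl_subset_sigmaProduct {A : Set ι} (hA : A.Countable) :
    Aᶜ.pi (fun i => {b i}) ⊆ sigmaProduct b :=
  fun _ hx => hA.mono (mem_pi_compl_singleton_iff.1 hx)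

theorem piecewise_mem_sigmaProduct {A : Set ι} [∀ i, Decidable (i ∈ A)] (hA : A.Countable)
    (x : ∀ i, X i) : A.piecewise x b ∈ sigmaProduct b :=
  pi_compl_subset_sigmaProduct hA fun _ hi => piecewise_eq_of_notMem _ _ _ hi

variable [∀ i, TopologicalSpace (X i)]

theorem dense_sigmaProduct (b : ∀ i, X i) : Dense (sigmaProduct b) := by
  classical
  intro x
  have hlim : Tendsto (fun F : Finset ι => (F : Set ι).piecewise x b) atTop (𝓝 x) :=
    tendsto_pi_nhds.2 fun i => tendsto_const_nhds.congr' <|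
      (eventually_ge_atTop {i}).mono fun F hF =>
        (piecewise_eq_of_mem _ _ _ (by simpa using hF)).symm
  exact mem_closure_of_tendsto hlim
    (Eventually.of_forall fun F => piecewise_mem_sigmaProduct F.countable_toSet x)

theorem isCompact_preimage_pi_compl [∀ i, CompactSpace (X i)] [∀ i, T1Space (X i)]
    {A : Set ι} (hA : A.Countable) :
    IsCompact (((↑) : sigmaProduct b → ∀ i, X i) ⁻¹' Aᶜ.pi fun i => {b i}) := by
  rw [Subtype.isCompact_iff, Subtype.image_preimage_coe,
    inter_eq_right.2 (pi_compl_subset_sigmaProduct hA)]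
  exact (isClosed_set_pi fun i _ => isClosed_singleton).isCompact

variable [∀ i, CompactSpace (X i)] [∀ i, T2Space (X i)]

theorem Continuous.exists_abs_sub_lt_of_agree_on_monotone {f : sigmaProduct b → ℝ}
    (hf : Continuous f) {ε : ℝ} (hε : 0 < ε) {A : ℕ → Set ι} (hAmono : Monotone A)
    (hA : (⋃ n, A n).Countable) {x y : ℕ → sigmaProduct b}
    (hx : ∀ n, (x n).1 ∈ (⋃ n, A n)ᶜ.pi fun i => {b i})
    (hy : ∀ n, (y n).1 ∈ (⋃ n, A n)ᶜ.pi fun i => {b i})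
    (hxy : ∀ n, ∀ i ∈ A n, (x n).1 i = (y n).1 i) : ∃ n, |f (x n) - f (y n)| < ε := by
  by_contra! hgap
  set C := ((↑) : sigmaProduct b → ∀ i, X i) ⁻¹' (⋃ n, A n)ᶜ.pi fun i => {b i}
  have hC : IsCompact C := isCompact_preimage_pi_compl hA
  -- a point common to all the `F n` lies on the diagonal, where `|f p.1 - f p.2| = 0`
  let F : ℕ → Set (sigmaProduct b × sigmaProduct b) := fun n =>
    C ×ˢ C ∩ {p | ε ≤ |f p.1 - f p.2|} ∩ {p | ∀ i ∈ A n, p.1.1 i = p.2.1 i}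
  have hFclosed : ∀ n, IsClosed (F n) := by
    intro n
    refine ((hC.prod hC).isClosed.inter (isClosed_le continuous_const (by fun_prop))).inter ?_
    simp only [ofPred_forall]
    exact isClosed_biInter fun i _ =>
      isClosed_eq ((continuous_apply i).comp (continuous_subtype_val.comp continuous_fst))
        ((continuous_apply i).comp (continuous_subtype_val.comp continuous_snd))
  obtain ⟨p, hp⟩ := IsCompact.nonempty_iInter_of_sequence_nonempty_isCompact_isClosed F
    (fun n => inter_subset_inter_right _ fun q hq i hi => hq i (hAmono n.le_succ hi))
    (fun n => ⟨(x n, y n), ⟨⟨hx n, hy n⟩, hgap n⟩, hxy n⟩)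
    ((hC.prod hC).of_isClosed_subset (hFclosed 0) fun q hq => hq.1.1) hFclosed
  have hpF := mem_iInter.1 hp
  have hdiag : p.1 = p.2 := by
    refine Subtype.ext <| funext fun i => ?_
    by_cases hi : i ∈ ⋃ n, A n
    · obtain ⟨n, hn⟩ := mem_iUnion.1 hi
      exact (hpF n).2 i hn
    · rw [(hpF 0).1.1.1 i hi, (hpF 0).1.1.2 i hi]
  have hgap0 := (hpF 0).1.2
  rw [mem_ofPred_eq, hdiag, sub_self, abs_zero] at hgap0
  exact hε.not_ge hgap0

theorem Continuous.exists_countable_abs_sub_le_of_agree {f : sigmaProduct b → ℝ}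
    (hf : Continuous f) {ε : ℝ} (hε : 0 < ε) :
    ∃ S : Set ι, S.Countable ∧
      ∀ x y : sigmaProduct b, (∀ i ∈ S, x.1 i = y.1 i) → |f x - f y| ≤ ε := by
  by_contra! hbad
  have hwit : ∀ S : Set ι, ∃ x y : sigmaProduct b,
      S.Countable → (∀ i ∈ S, x.1 i = y.1 i) ∧ ε < |f x - f y| := by
    intro S
    by_cases hS : S.Countable
    · obtain ⟨x, y, hxy⟩ := hbad S hS
      exact ⟨x, y, fun _ => hxy⟩
    · exact ⟨⟨b, mem_sigmaProduct_self⟩, ⟨b, mem_sigmaProduct_self⟩, (absurd · hS)⟩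
  choose x y hxy using hwit
  obtain ⟨A, hAmono, hA, hAsupp⟩ := exists_monotone_countable_chain
    (fun S => {i | (x S).1 i ≠ b i} ∪ {i | (y S).1 i ≠ b i}) fun S => (x S).2.union (y S).2
  have hsupp (n : ℕ) : {i | (x (A n)).1 i ≠ b i} ∪ {i | (y (A n)).1 i ≠ b i} ⊆ ⋃ n, A n :=
    (hAsupp n).trans (subset_iUnion A (n + 1))
  obtain ⟨n, hn⟩ := hf.exists_abs_sub_lt_of_agree_on_monotone hε hAmono (countable_iUnion hA)
    (fun n => mem_pi_compl_singleton_iff.2 (subset_union_left.trans (hsupp n)))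
    (fun n => mem_pi_compl_singleton_iff.2 (subset_union_right.trans (hsupp n)))
    fun n => (hxy _ (hA n)).1
  exact (hxy _ (hA n)).2.not_gt hn

theorem Continuous.exists_countable_eq_of_agree {f : sigmaProduct b → ℝ} (hf : Continuous f) :
    ∃ S : Set ι, S.Countable ∧ ∀ x y : sigmaProduct b, (∀ i ∈ S, x.1 i = y.1 i) → f x = f y := by
  choose S hS hSf using fun n : ℕ => hf.exists_countable_abs_sub_le_of_agree n.one_div_pos_of_nat
  refine ⟨⋃ n, S n, countable_iUnion hS, fun x y hxy => eq_of_forall_dist_le fun ε hε => ?_⟩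
  obtain ⟨n, hn⟩ := exists_nat_one_div_lt hε
  rw [Real.dist_eq]
  exact (hSf n x y fun i hi => hxy i (mem_iUnion_of_mem n hi)).trans hn.le

theorem Continuous.exists_continuous_extension_of_sigmaProduct {f : sigmaProduct b → ℝ}
    (hf : Continuous f) :
    ∃ g : (∀ i, X i) → ℝ, Continuous g ∧ ∀ x : sigmaProduct b, g x = f x := by
  classical
  obtain ⟨S, hS, hSf⟩ := hf.exists_countable_eq_of_agree
  have hpw : Continuous fun x : ∀ i, X i => S.piecewise x b := by
    refine continuous_pi fun i => ?_
    by_cases hi : i ∈ S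
    · simpa only [piecewise_eq_of_mem _ _ _ hi] using continuous_apply i
    · simpa only [piecewise_eq_of_notMem _ _ _ hi] using continuous_const
  exact ⟨fun x => f ⟨S.piecewise x b, piecewise_mem_sigmaProduct hS x⟩,
    hf.comp (hpw.subtype_mk _), fun x => hSf _ _ fun i hi => piecewise_eq_of_mem _ _ _ hi⟩

end SigmaProduct

theorem Dense.exists_continuous_extension_of_forall_real {Y : Type*} [TopologicalSpace Y]
    {s : Set Y} (hs : Dense s)
    (hext : ∀ f : s → ℝ, Continuous f → ∃ g : Y → ℝ, Continuous g ∧ ∀ x : s, g x = f x)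
    {K : Type*} [TopologicalSpace K] [CompactSpace K] [T2Space K] {f : s → K}
    (hf : Continuous f) : ∃ g : Y → K, Continuous g ∧ ∀ x : s, g x = f x := by
  let e : K → C(K, ℝ) → ℝ := fun k φ => φ k
  have he : IsClosedEmbedding e := by
    refine (continuous_pi fun φ => φ.continuous).isClosedEmbedding fun a b hab => ?_
    by_contra hne
    obtain ⟨φ, hφ, hφab⟩ := separatesPoints_continuous_of_t35Space hne
    exact hφab (congrFun hab ⟨φ, hφ⟩)
  choose G hG hGf using fun φ : C(K, ℝ) => hext (φ ∘ f) (φ.continuous.comp hf)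
  let Φ : Y → C(K, ℝ) → ℝ := fun y φ => G φ y
  have hΦ : Continuous Φ := continuous_pi hG
  have hΦs : ∀ x : s, Φ x = e (f x) := fun x => funext fun φ => hGf φ x
  have hrange : ∀ y, Φ y ∈ range e := by
    have hsub : s ⊆ Φ ⁻¹' range e := fun x hx => ⟨f ⟨x, hx⟩, (hΦs ⟨x, hx⟩).symm⟩
    exact fun y => closure_minimal hsub (he.isClosed_range.preimage hΦ) (hs y)
  choose g hg using hrange
  have hge : e ∘ g = Φ := funext hg
  exact ⟨g, he.continuous_iff.2 (hge ▸ hΦ), fun x => he.injective ((hg x).trans (hΦs x))⟩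

theorem sigmaProd_pseudocompact_and_stoneCech_general
    (T : Type) :
    (∀ f : ↥(SigmaProd T) → ℝ, Continuous f → ∃ M : ℝ, ∀ x, |f x| ≤ M) ∧
    Dense (SigmaProd T) ∧
    ∀ (K : Type) [TopologicalSpace K] [CompactSpace K] [T2Space K]
      (f : ↥(SigmaProd T) → K), Continuous f →
      ∃ g : (T → HilbertCube) → K, Continuous g ∧ ∀ x : ↥(SigmaProd T), g x.1 = f x := by
  have hdense : Dense (SigmaProd T) := dense_sigmaProduct 0
  have hext (f : SigmaProd T → ℝ) (hf : Continuous f) :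
      ∃ g : (T → HilbertCube) → ℝ, Continuous g ∧ ∀ x : SigmaProd T, g x = f x :=
    hf.exists_continuous_extension_of_sigmaProduct (b := 0)
  refine ⟨fun f hf => ?_, hdense, fun K _ _ _ f hf =>
    hdense.exists_continuous_extension_of_forall_real hext hf⟩
  obtain ⟨g, hg, hgf⟩ := hext f hf
  obtain ⟨M, hM⟩ := (isCompact_range hg.abs).bddAbove
  exact ⟨M, fun x => hgf x ▸ hM (mem_range_self x.1)⟩

/-- the sigma-product `Σ` of `ω₁` copies of the Hilbert cube is a dense
pseudocompact subspace of `Q^T`, and the inclusion `Σ ↪ Q^T` realizes `Q^T` as the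
Stone–Čech compactification of `Σ`: every continuous map from `Σ` to a compact Hausdorff
space extends continuously over `Q^T`. -/
theorem sigmaProd_pseudocompact_and_stoneCech
    (T : Type) (hT : Cardinal.mk T = Cardinal.aleph 1) :
    (∀ f : ↥(SigmaProd T) → ℝ, Continuous f → ∃ M : ℝ, ∀ x, |f x| ≤ M) ∧
    Dense (SigmaProd T) ∧
    ∀ (K : Type) [TopologicalSpace K] [CompactSpace K] [T2Space K]
      (f : ↥(SigmaProd T) → K), Continuous f →
      ∃ g : (T → HilbertCube) → K, Continuous g ∧ ∀ x : ↥(SigmaProd T), g x.1 = f x :=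
  sigmaProd_pseudocompact_and_stoneCech_general T
end
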